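/- Let Σ be a finite set, μ a probability distribution on Σ with full support, (H,+) a finite abelian group, and d ∈ ℕ with d ≥ 1. Suppose f : Σ^n → ℂ is 1-bounded, P ∈ 𝒫(H,n,Σ), and L : Σ^n → ℂ has degree at most d and ‖L‖₂ ≤ 1 (over μ^⊗n). If |⟨f, P·L⟩| ≥ δ, then, choosing a random restriction (I,y) with alive-probability 1/(2d), with probability at least δ²/(2e) over (I,y) we have |⟨f_{\bar I→y}, P_{\bar I→y}⟩| ≥ δ/√(2e), where the inner product of the restricted functions is over μ^{⊗I}. -/

import Mathlib

open scoped Classical BigOperators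

noncomputable section

/-- Product weight `μ^{⊗n}(x) = ∏ᵢ μ(xᵢ)` on `Ω^n`. -/
def wtp {Ω : Type*} [Fintype Ω] (μ : Ω → ℝ) {n : ℕ} (x : Fin n → Ω) : ℝ :=
  ∏ i, μ (x i)

/-- Inner product `⟨f,g⟩ = E_{x∼μ^{⊗n}}[f(x)·conj(g(x))]` on functions `Ω^n → ℂ`. -/
def innerμ {Ω : Type*} [Fintype Ω] (μ : Ω → ℝ) {n : ℕ} (f g : (Fin n → Ω) → ℂ) : ℂ :=
  ∑ x, (wtp μ x : ℂ) * f x * starRingEnd ℂ (g x)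

/-- `g` is an `S`-junta: it depends only on the coordinates in `S`. -/
def IsJunta {Ω : Type*} {n : ℕ} (g : (Fin n → Ω) → ℂ) (S : Finset (Fin n)) : Prop :=
  ∀ x y : Fin n → Ω, (∀ i ∈ S, x i = y i) → g x = g y

/-- The squared `L²(μ^{⊗n})`-norm of `g`. -/
def norm2sq {Ω : Type*} [Fintype Ω] (μ : Ω → ℝ) {n : ℕ} (g : (Fin n → Ω) → ℂ) : ℝ :=
  ∑ x, wtp μ x * Complex.normSq (g x)

/-- `L` has degree at most `d`: it is a sum of `S`-juntas over sets `S` of size at most `d`. -/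
def DegreeLE {Ω : Type*} [Fintype Ω] {n : ℕ} (L : (Fin n → Ω) → ℂ) (d : ℕ) : Prop :=
  ∃ F : Finset (Fin n) → ((Fin n → Ω) → ℂ),
    (∀ S, IsJunta (F S) S) ∧ (∀ S : Finset (Fin n), d < S.card → F S = 0) ∧ L = ∑ S, F S

/-- The class `𝒫(H,n,Ω)` of product functions: `P(x) = c·∏ᵢ uᵢ(xᵢ)` where `|c| = 1` and each
`uᵢ` takes values in the `|H|`-th roots of unity. -/
def IsProductFn (H : Type*) [Fintype H] {Ω : Type*} {n : ℕ}
    (P : (Fin n → Ω) → ℂ) : Prop :=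
  ∃ (c : ℂ) (u : Fin n → Ω → ℂ), ‖c‖ = 1 ∧
    (∀ i s, u i s ^ Fintype.card H = 1) ∧
    ∀ x, P x = c * ∏ i, u i (x i)

/-- The point of `Ω^n` agreeing with `w` on `I` and with `y` outside `I`. -/
def mergeF {Ω : Type*} {n : ℕ} (I : Finset (Fin n)) (w : {i // i ∈ I} → Ω)
    (y : Fin n → Ω) : Fin n → Ω :=
  fun i => if h : i ∈ I then w ⟨i, h⟩ else y i

/-!
Write `g = f · P̄`; then `|g| ≤ 1` and `⟨f, P·L⟩ = ⟨g, L⟩`. In the Efron–Stein decomposition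
`g = ∑_S g^{=S}` only the components with `|S| ≤ d` meet `L`, so Cauchy–Schwarz and Parseval give
`∑_{|S| ≤ d} ‖g^{=S}‖² ≥ δ²`. The restricted correlation `⟨f_{Ī→y}, P_{Ī→y}⟩` is the average of `g`
over the coordinates in `I`, evaluated at `y`; this average keeps exactly the components with
`S ∩ I = ∅`, so its squared norm, averaged over `I`, is `∑_S (1 - 1/(2d))^{|S|} ‖g^{=S}‖²`, which is
at least `δ²/2 ≥ δ²/e` by Bernoulli's inequality. As the average is `1`-bounded, its squared norm
is at most `δ²/(2e)` plus the probability that it exceeds `δ/√(2e)`.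
-/

open Finset

section Combinatorics

variable {α M : Type*} [DecidableEq α] [AddCommGroup M]

lemma sum_powerset_neg_one_pow_card_smul_eq_zero {S : Finset α} {i : α} (hi : i ∈ S)
    (F : Finset α → M) (hF : ∀ U ⊆ S.erase i, F (insert i U) = F U) :
    ∑ U ∈ S.powerset, (-1 : ℤ) ^ U.card • F U = 0 := by
  rw [← insert_erase hi, sum_powerset_insert (notMem_erase i S), ← sum_add_distrib]
  refine sum_eq_zero fun U hU => ?_
  have hiU : i ∉ U := fun h => notMem_erase i S (mem_powerset.mp hU h)
  rw [card_insert_of_notMem hiU, hF U (mem_powerset.mp hU), pow_succ, mul_neg_one, neg_smul,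
    add_neg_cancel]

lemma sum_sum_powerset_neg_one_pow_card_smul_union_compl [Fintype α] (F : Finset α → M) :
    ∑ S, ∑ U ∈ S.powerset, (-1 : ℤ) ^ U.card • F (U ∪ Sᶜ) = F ∅ :=
  calc ∑ S, ∑ U ∈ S.powerset, (-1 : ℤ) ^ U.card • F (U ∪ Sᶜ)
      = ∑ W, ∑ U ∈ W.powerset, (-1 : ℤ) ^ U.card • F W := by
        -- `(S, U) ↦ (U ∪ Sᶜ, U)` is an involution of `{(S, U) | U ⊆ S}`
        have hinv : ∀ p ∈ univ.sigma powerset,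
            (⟨p.2 ∪ (p.2 ∪ p.1ᶜ)ᶜ, p.2⟩ : (_ : Finset α) × Finset α) = p := by
          rintro ⟨S, U⟩ hp
          rw [mem_sigma, mem_powerset] at hp
          simp only [compl_union, compl_compl, union_inter_distrib_left, union_compl, univ_inter,
            union_eq_right.mpr hp.2]
        rw [sum_sigma', sum_sigma']
        have hmem : ∀ p : (_ : Finset α) × Finset α, ⟨p.2 ∪ p.1ᶜ, p.2⟩ ∈ univ.sigma powerset :=
          fun p => mem_sigma.mpr ⟨mem_univ _, mem_powerset.mpr subset_union_left⟩
        exact sum_bij' (fun p _ => ⟨p.2 ∪ p.1ᶜ, p.2⟩) (fun p _ => ⟨p.2 ∪ p.1ᶜ, p.2⟩)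
          (fun p _ => hmem p) (fun p _ => hmem p) hinv hinv fun _ _ => rfl
    _ = F ∅ := by
        simp only [← sum_smul, sum_powerset_neg_one_pow_card]
        simp

lemma sum_powerset_compl_pow_mul_pow [Fintype α] {R : Type*} [CommSemiring R] {q ρ : R}
    (hqρ : q + ρ = 1) (S : Finset α) :
    ∑ I ∈ Sᶜ.powerset, q ^ I.card * ρ ^ (Fintype.card α - I.card) = ρ ^ S.card := by
  rw [← mul_one (ρ ^ S.card), ← one_pow Sᶜ.card, ← hqρ, ← sum_pow_mul_eq_add_pow, mul_sum]
  refine sum_congr rfl fun I hI => ?_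
  have hIS := card_le_card (mem_powerset.mp hI)
  rw [card_compl] at hIS ⊢
  rw [mul_left_comm, ← pow_add]
  congr 2
  have := card_le_univ S
  omega

end Combinatorics

lemma IsProductFn.norm_eq_one {Ω H : Type*} [Fintype H] [Nonempty H] {n : ℕ}
    {P : (Fin n → Ω) → ℂ} (hP : IsProductFn H P) (x : Fin n → Ω) : ‖P x‖ = 1 := by
  obtain ⟨c, u, hc, hu, hPx⟩ := hP
  rw [hPx, norm_mul, hc, one_mul, norm_prod]
  refine prod_eq_one fun i _ => ?_
  exact (pow_eq_one_iff_of_nonneg (norm_nonneg _) Fintype.card_ne_zero).mp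
    (by rw [← norm_pow, hu, norm_one])

lemma half_le_one_sub_inv_two_mul_pow {d : ℕ} (hd : 1 ≤ d) :
    1 / 2 ≤ (1 - 1 / (2 * (d : ℝ))) ^ d := by
  have hd1 : (1 : ℝ) ≤ d := by exact_mod_cast hd
  have hbound : -2 ≤ -(1 / (2 * (d : ℝ))) := by
    rw [neg_le_neg_iff, div_le_iff₀ (by positivity)]
    linarith
  calc (1 / 2 : ℝ) = 1 + d * -(1 / (2 * (d : ℝ))) := by field_simp; ring
    _ ≤ (1 + -(1 / (2 * (d : ℝ)))) ^ d := one_add_mul_le_pow hbound d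
    _ = (1 - 1 / (2 * (d : ℝ))) ^ d := by rw [← sub_eq_add_neg]

namespace RandomRestriction

variable {Ω : Type*} {n : ℕ}

def swapOn (I : Finset (Fin n)) : (Fin n → Ω) × (Fin n → Ω) ≃ (Fin n → Ω) × (Fin n → Ω) :=
  Function.Involutive.toPerm (fun p => (I.piecewise p.2 p.1, I.piecewise p.1 p.2)) fun p => by
    ext i <;> by_cases hi : i ∈ I <;> simp [hi]

@[simp]
lemma swapOn_apply (I : Finset (Fin n)) (p : (Fin n → Ω) × (Fin n → Ω)) :
    swapOn I p = (I.piecewise p.2 p.1, I.piecewise p.1 p.2) := rfl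

variable [Fintype Ω] {μ : Ω → ℝ}

lemma sum_prod_eq_one (hsum : ∑ a, μ a = 1) (ι : Type*) [Fintype ι] [DecidableEq ι] :
    ∑ w : ι → Ω, ∏ i, μ (w i) = 1 := by
  rw [← Fintype.prod_sum]
  simp [hsum]

lemma sum_wtp (hsum : ∑ a, μ a = 1) : ∑ x : Fin n → Ω, wtp μ x = 1 :=
  sum_prod_eq_one hsum (Fin n)

lemma wtp_nonneg (hμ : ∀ a, 0 ≤ μ a) (x : Fin n → Ω) : 0 ≤ wtp μ x :=
  prod_nonneg fun i _ => hμ (x i)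

lemma wtp_mul_wtp_swapOn (I : Finset (Fin n)) (p : (Fin n → Ω) × (Fin n → Ω)) :
    wtp μ (swapOn I p).1 * wtp μ (swapOn I p).2 = wtp μ p.1 * wtp μ p.2 := by
  simp only [wtp, ← prod_mul_distrib]
  refine prod_congr rfl fun i _ => ?_
  by_cases hi : i ∈ I <;> simp [hi, mul_comm]

lemma sum_wtp_mul_wtp_swapOn (I : Finset (Fin n)) (G : (Fin n → Ω) → (Fin n → Ω) → ℂ) :
    ∑ x, ∑ z, (wtp μ x * wtp μ z : ℂ) * G (I.piecewise z x) (I.piecewise x z) =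
      ∑ x, ∑ z, (wtp μ x * wtp μ z : ℂ) * G x z := by
  simp only [← Fintype.sum_prod_type']
  conv_rhs => rw [← (swapOn I).sum_comp]
  refine sum_congr rfl fun p _ => ?_
  have h := congrArg ((↑) : ℝ → ℂ) (wtp_mul_wtp_swapOn (μ := μ) I p)
  push_cast at h
  rw [h]
  rfl

lemma sum_wtp_mul_wtp_piecewise (hsum : ∑ a, μ a = 1) (I : Finset (Fin n))
    (F : (Fin n → Ω) → ℂ) :
    ∑ x, ∑ z, (wtp μ x * wtp μ z : ℂ) * F (I.piecewise z x) = ∑ x, (wtp μ x : ℂ) * F x := by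
  rw [sum_wtp_mul_wtp_swapOn I fun x _ => F x]
  simp only [mul_right_comm _ _ (F _), ← mul_sum, ← Complex.ofReal_sum, sum_wtp hsum,
    Complex.ofReal_one, mul_one]

/-- The coordinates of `z` outside `I` are dummies: they integrate out because `μ` has
total mass `1`. -/
def averageOver (μ : Ω → ℝ) (I : Finset (Fin n)) :
    ((Fin n → Ω) → ℂ) →ₗ[ℂ] ((Fin n → Ω) → ℂ) where
  toFun h x := ∑ z, (wtp μ z : ℂ) * h (I.piecewise z x)
  map_add' a b := by ext x; simp [mul_add, sum_add_distrib]
  map_smul' c a := by ext x; simp [mul_sum, mul_left_comm]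

lemma averageOver_apply (I : Finset (Fin n)) (h : (Fin n → Ω) → ℂ) (x : Fin n → Ω) :
    averageOver μ I h x = ∑ z, (wtp μ z : ℂ) * h (I.piecewise z x) := rfl

lemma wtp_eq_prod_mul_prod (I : Finset (Fin n)) (x : Fin n → Ω) :
    wtp μ x = (∏ i : I, μ (x i)) * ∏ i : {i // i ∉ I}, μ (x i) := by
  rw [prod_coe_sort I fun i => μ (x i), ← prod_subtype Iᶜ (by simp) fun i => μ (x i),
    prod_mul_prod_compl, wtp]

lemma averageOver_apply_eq_sum_mergeF (hsum : ∑ a, μ a = 1) (I : Finset (Fin n))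
    (h : (Fin n → Ω) → ℂ) (y : Fin n → Ω) :
    averageOver μ I h y =
      ∑ w : {i // i ∈ I} → Ω, ((∏ i, μ (w i) : ℝ) : ℂ) * h (mergeF I w y) := by
  let e := (Equiv.piEquivPiSubtypeProd (· ∈ I) fun _ => Ω).symm
  have hwtp : ∀ p, wtp μ (e p) = (∏ i, μ (p.1 i)) * ∏ i, μ (p.2 i) := fun p => by
    rw [wtp_eq_prod_mul_prod I]
    congr 1 <;> refine Fintype.prod_congr _ _ fun i => ?_
    · simp [e, i.2]
    · simp [e, dif_neg i.2]
  have hmerge : ∀ p, I.piecewise (e p) y = mergeF I p.1 y := fun p => by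
    ext i; by_cases hi : i ∈ I <;> simp [e, mergeF, hi]
  rw [averageOver_apply, ← e.sum_comp, Fintype.sum_prod_type]
  refine sum_congr rfl fun w _ => ?_
  simp only [hwtp, hmerge, Complex.ofReal_mul, mul_assoc, ← mul_sum, ← sum_mul,
    ← Complex.ofReal_sum, sum_prod_eq_one hsum, Complex.ofReal_one, one_mul]

lemma averageOver_empty (hsum : ∑ a, μ a = 1) : averageOver μ (∅ : Finset (Fin n)) = .id := by
  ext h x
  simp [averageOver_apply, ← sum_mul, ← Complex.ofReal_sum, sum_wtp hsum]

lemma averageOver_averageOver (hsum : ∑ a, μ a = 1) (I J : Finset (Fin n))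
    (h : (Fin n → Ω) → ℂ) : averageOver μ I (averageOver μ J h) = averageOver μ (I ∪ J) h := by
  ext x
  have hpw : ∀ z z' : Fin n → Ω,
      J.piecewise z' (I.piecewise z x) = (I ∪ J).piecewise (J.piecewise z' z) x := fun z z' => by
    ext i; by_cases hi : i ∈ I <;> by_cases hj : i ∈ J <;> simp [hi, hj]
  simp only [averageOver_apply, mul_sum, hpw, ← mul_assoc, ← Complex.ofReal_mul]
  push_cast
  exact sum_wtp_mul_wtp_piecewise hsum J fun u => h ((I ∪ J).piecewise u x)

lemma averageOver_of_isJunta (hsum : ∑ a, μ a = 1) {h : (Fin n → Ω) → ℂ} {T I : Finset (Fin n)}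
    (hh : IsJunta h T) (hIT : Disjoint I T) : averageOver μ I h = h := by
  ext x
  have hpw : ∀ z, h (I.piecewise z x) = h x := fun z =>
    hh _ _ fun i hi => piecewise_eq_of_notMem _ _ _ (disjoint_right.mp hIT hi)
  simp [averageOver_apply, hpw, ← sum_mul, ← Complex.ofReal_sum, sum_wtp hsum]

lemma innerμ_averageOver_left (I : Finset (Fin n)) (a b : (Fin n → Ω) → ℂ) :
    innerμ μ (averageOver μ I a) b = innerμ μ a (averageOver μ I b) := by
  have hpw : ∀ x z : Fin n → Ω, I.piecewise (I.piecewise x z) (I.piecewise z x) = x :=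
    fun x z => by ext i; by_cases hi : i ∈ I <;> simp [hi]
  calc innerμ μ (averageOver μ I a) b
      = ∑ x, ∑ z, (wtp μ x * wtp μ z : ℂ) * (a (I.piecewise z x) * starRingEnd ℂ (b x)) := by
        simp only [innerμ, averageOver_apply, mul_sum, sum_mul]
        exact sum_congr rfl fun x _ => sum_congr rfl fun z _ => by ring
    _ = ∑ x, ∑ z, (wtp μ x * wtp μ z : ℂ) * (a x * starRingEnd ℂ (b (I.piecewise z x))) := by
        rw [← sum_wtp_mul_wtp_swapOn I fun x z => a x * starRingEnd ℂ (b (I.piecewise z x))]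
        simp only [hpw]
    _ = innerμ μ a (averageOver μ I b) := by
        simp only [innerμ, averageOver_apply, map_sum, map_mul, Complex.conj_ofReal, mul_sum]
        exact sum_congr rfl fun x _ => sum_congr rfl fun z _ => by ring

lemma norm_averageOver_apply_le_one (hμ : ∀ a, 0 ≤ μ a) (hsum : ∑ a, μ a = 1)
    {h : (Fin n → Ω) → ℂ} (hh : ∀ x, ‖h x‖ ≤ 1) (I : Finset (Fin n)) (x : Fin n → Ω) :
    ‖averageOver μ I h x‖ ≤ 1 :=
  calc ‖averageOver μ I h x‖ ≤ ∑ z, wtp μ z * ‖h (I.piecewise z x)‖ := by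
        refine (norm_sum_le _ _).trans_eq (sum_congr rfl fun z _ => ?_)
        rw [norm_mul, Complex.norm_real, Real.norm_of_nonneg (wtp_nonneg hμ z)]
    _ ≤ ∑ z, wtp μ z := sum_le_sum fun z _ =>
        mul_le_of_le_one_right (wtp_nonneg hμ z) (hh _)
    _ = 1 := sum_wtp hsum

/-- The Efron–Stein component `g^{=S}`, by inclusion–exclusion over the averages
`g^{⊆T} = averageOver μ Tᶜ g`. -/
def efronStein (μ : Ω → ℝ) (S : Finset (Fin n)) : ((Fin n → Ω) → ℂ) →ₗ[ℂ] ((Fin n → Ω) → ℂ) :=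
  ∑ U ∈ S.powerset, (-1 : ℤ) ^ U.card • averageOver μ (U ∪ Sᶜ)

lemma efronStein_apply (S : Finset (Fin n)) (g : (Fin n → Ω) → ℂ) :
    efronStein μ S g = ∑ U ∈ S.powerset, (-1 : ℤ) ^ U.card • averageOver μ (U ∪ Sᶜ) g := by
  simp only [efronStein, LinearMap.sum_apply, LinearMap.smul_apply]

lemma sum_efronStein (hsum : ∑ a, μ a = 1) :
    ∑ S : Finset (Fin n), efronStein μ S = LinearMap.id :=
  (sum_sum_powerset_neg_one_pow_card_smul_union_compl (averageOver μ)).trans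
    (averageOver_empty hsum)

lemma sum_efronStein_apply (hsum : ∑ a, μ a = 1) (g : (Fin n → Ω) → ℂ) :
    ∑ S : Finset (Fin n), efronStein μ S g = g := by
  rw [← LinearMap.sum_apply, sum_efronStein hsum, LinearMap.id_apply]

lemma averageOver_efronStein (hsum : ∑ a, μ a = 1) (I S : Finset (Fin n))
    (g : (Fin n → Ω) → ℂ) :
    averageOver μ I (efronStein μ S g) =
      ∑ U ∈ S.powerset, (-1 : ℤ) ^ U.card • averageOver μ (I ∪ (U ∪ Sᶜ)) g := by
  simp only [efronStein_apply, map_sum, map_zsmul, averageOver_averageOver hsum]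

lemma averageOver_efronStein_of_disjoint (hsum : ∑ a, μ a = 1) {I S : Finset (Fin n)}
    (hIS : Disjoint I S) (g : (Fin n → Ω) → ℂ) :
    averageOver μ I (efronStein μ S g) = efronStein μ S g := by
  rw [averageOver_efronStein hsum, efronStein_apply]
  refine sum_congr rfl fun U _ => ?_
  rw [union_eq_right.mpr ((subset_compl_iff_disjoint_right.mpr hIS).trans subset_union_right)]

lemma averageOver_efronStein_of_mem (hsum : ∑ a, μ a = 1) {I S : Finset (Fin n)} {i : Fin n}
    (hiI : i ∈ I) (hiS : i ∈ S) (g : (Fin n → Ω) → ℂ) :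
    averageOver μ I (efronStein μ S g) = 0 := by
  rw [averageOver_efronStein hsum]
  refine sum_powerset_neg_one_pow_card_smul_eq_zero hiS _ fun U _ => ?_
  rw [insert_union, union_insert, insert_eq_of_mem (mem_union_left _ hiI)]

lemma efronStein_eq_zero_of_isJunta (hsum : ∑ a, μ a = 1) {h : (Fin n → Ω) → ℂ}
    {S T : Finset (Fin n)} (hh : IsJunta h T) {i : Fin n} (hiS : i ∈ S) (hiT : i ∉ T) :
    efronStein μ S h = 0 := by
  rw [efronStein_apply]
  refine sum_powerset_neg_one_pow_card_smul_eq_zero hiS _ fun U _ => ?_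
  rw [insert_union, insert_eq, union_comm, ← averageOver_averageOver hsum,
    averageOver_of_isJunta hsum hh (disjoint_singleton_left.mpr hiT)]

lemma efronStein_eq_zero_of_degreeLE (hsum : ∑ a, μ a = 1) {L : (Fin n → Ω) → ℂ} {d : ℕ}
    (hL : DegreeLE L d) {S : Finset (Fin n)} (hS : d < S.card) : efronStein μ S L = 0 := by
  obtain ⟨F, hF, hFd, rfl⟩ := hL
  rw [map_sum]
  refine sum_eq_zero fun T _ => ?_
  by_cases hT : d < T.card
  · rw [hFd T hT, map_zero]
  · obtain ⟨i, hiS, hiT⟩ := not_subset.mp fun hST => hT (hS.trans_le (card_le_card hST))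
    exact efronStein_eq_zero_of_isJunta hsum (hF T) hiS hiT

lemma averageOver_eq_sum_efronStein (hsum : ∑ a, μ a = 1) (I : Finset (Fin n))
    (g : (Fin n → Ω) → ℂ) : averageOver μ I g = ∑ S ∈ Iᶜ.powerset, efronStein μ S g := by
  conv_lhs => rw [← sum_efronStein_apply hsum g, map_sum]
  refine (sum_subset (subset_univ _) fun S _ hS => ?_).symm.trans
    (sum_congr rfl fun S hS => ?_)
  · obtain ⟨i, hiS, hiI⟩ := not_subset.mp (mem_powerset.not.mp hS)
    exact averageOver_efronStein_of_mem hsum (notMem_compl.mp hiI) hiS g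
  · exact averageOver_efronStein_of_disjoint hsum
      (disjoint_comm.mp (subset_compl_iff_disjoint_right.mp (mem_powerset.mp hS))) g

lemma innerμ_sum_left {ι : Type*} (s : Finset ι) (a : ι → (Fin n → Ω) → ℂ)
    (b : (Fin n → Ω) → ℂ) : innerμ μ (∑ i ∈ s, a i) b = ∑ i ∈ s, innerμ μ (a i) b := by
  simp only [innerμ, Finset.sum_apply, mul_sum, sum_mul]
  exact sum_comm

lemma conj_innerμ (a b : (Fin n → Ω) → ℂ) : starRingEnd ℂ (innerμ μ a b) = innerμ μ b a := by
  simp only [innerμ, map_sum, map_mul, Complex.conj_ofReal, Complex.conj_conj]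
  exact sum_congr rfl fun x _ => by ring

lemma innerμ_sum_right {ι : Type*} (s : Finset ι) (a : (Fin n → Ω) → ℂ)
    (b : ι → (Fin n → Ω) → ℂ) : innerμ μ a (∑ i ∈ s, b i) = ∑ i ∈ s, innerμ μ a (b i) := by
  rw [← conj_innerμ, innerμ_sum_left, map_sum]
  simp only [conj_innerμ]

lemma innerμ_self (h : (Fin n → Ω) → ℂ) : innerμ μ h h = norm2sq μ h := by
  simp only [innerμ, norm2sq, mul_assoc, Complex.mul_conj, Complex.ofReal_sum, Complex.ofReal_mul]

lemma norm2sq_nonneg (hμ : ∀ a, 0 ≤ μ a) (h : (Fin n → Ω) → ℂ) : 0 ≤ norm2sq μ h :=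
  sum_nonneg fun x _ => mul_nonneg (wtp_nonneg hμ x) (Complex.normSq_nonneg _)

lemma norm_innerμ_le (hμ : ∀ a, 0 ≤ μ a) (a b : (Fin n → Ω) → ℂ) :
    ‖innerμ μ a b‖ ≤ √(norm2sq μ a) * √(norm2sq μ b) :=
  calc ‖innerμ μ a b‖
      ≤ ∑ x, √(wtp μ x * Complex.normSq (a x)) * √(wtp μ x * Complex.normSq (b x)) := by
        refine (norm_sum_le _ _).trans_eq (sum_congr rfl fun x _ => ?_)
        have hw := wtp_nonneg hμ x
        rw [norm_mul, norm_mul, Complex.norm_real, Real.norm_of_nonneg hw, Complex.norm_conj,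
          Real.sqrt_mul hw, Real.sqrt_mul hw, ← Complex.norm_def, ← Complex.norm_def]
        rw [mul_mul_mul_comm, Real.mul_self_sqrt hw, mul_assoc]
    _ ≤ √(norm2sq μ a) * √(norm2sq μ b) :=
        Real.sum_sqrt_mul_sqrt_le _ (fun x => mul_nonneg (wtp_nonneg hμ x) (Complex.normSq_nonneg _))
          (fun x => mul_nonneg (wtp_nonneg hμ x) (Complex.normSq_nonneg _))

lemma innerμ_efronStein_of_mem_of_notMem (hsum : ∑ a, μ a = 1) {S T : Finset (Fin n)}
    {i : Fin n} (hiS : i ∈ S) (hiT : i ∉ T) (a b : (Fin n → Ω) → ℂ) :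
    innerμ μ (efronStein μ S a) (efronStein μ T b) = 0 := by
  rw [← averageOver_efronStein_of_disjoint hsum (disjoint_singleton_left.mpr hiT) b,
    ← innerμ_averageOver_left, averageOver_efronStein_of_mem hsum (mem_singleton_self i) hiS]
  simp [innerμ]

lemma innerμ_efronStein_of_ne (hsum : ∑ a, μ a = 1) {S T : Finset (Fin n)} (hST : S ≠ T)
    (a b : (Fin n → Ω) → ℂ) : innerμ μ (efronStein μ S a) (efronStein μ T b) = 0 := by
  obtain ⟨i, hiS, hiT⟩ | ⟨i, hiT, hiS⟩ : (∃ i ∈ S, i ∉ T) ∨ ∃ i ∈ T, i ∉ S := by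
    by_contra! h
    exact hST (Subset.antisymm h.1 h.2)
  · exact innerμ_efronStein_of_mem_of_notMem hsum hiS hiT a b
  · rw [← conj_innerμ, innerμ_efronStein_of_mem_of_notMem hsum hiT hiS, map_zero]

lemma innerμ_sum_efronStein (hsum : ∑ a, μ a = 1) (𝒜 : Finset (Finset (Fin n)))
    (a b : (Fin n → Ω) → ℂ) :
    innerμ μ (∑ S ∈ 𝒜, efronStein μ S a) (∑ S ∈ 𝒜, efronStein μ S b) =
      ∑ S ∈ 𝒜, innerμ μ (efronStein μ S a) (efronStein μ S b) := by
  simp only [innerμ_sum_left, innerμ_sum_right]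
  refine sum_congr rfl fun S hS => ?_
  rw [sum_eq_single_of_mem S hS fun T _ hTS => innerμ_efronStein_of_ne hsum hTS a b]

lemma norm2sq_sum_efronStein (hsum : ∑ a, μ a = 1) (𝒜 : Finset (Finset (Fin n)))
    (g : (Fin n → Ω) → ℂ) :
    norm2sq μ (∑ S ∈ 𝒜, efronStein μ S g) = ∑ S ∈ 𝒜, norm2sq μ (efronStein μ S g) := by
  have h := innerμ_sum_efronStein hsum 𝒜 g g
  simp only [innerμ_self] at h
  exact_mod_cast h

lemma norm2sq_averageOver (hsum : ∑ a, μ a = 1) (I : Finset (Fin n)) (g : (Fin n → Ω) → ℂ) :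
    norm2sq μ (averageOver μ I g) = ∑ S ∈ Iᶜ.powerset, norm2sq μ (efronStein μ S g) := by
  rw [averageOver_eq_sum_efronStein hsum, norm2sq_sum_efronStein hsum]

lemma sq_le_sum_norm2sq_efronStein_of_degreeLE (hμ : ∀ a, 0 ≤ μ a) (hsum : ∑ a, μ a = 1)
    {L : (Fin n → Ω) → ℂ} {d : ℕ} (hL : DegreeLE L d) (hLnorm : norm2sq μ L ≤ 1)
    {g : (Fin n → Ω) → ℂ} {δ : ℝ} (hδ : 0 ≤ δ) (hcorr : δ ≤ ‖innerμ μ g L‖) :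
    δ ^ 2 ≤ ∑ S with S.card ≤ d, norm2sq μ (efronStein μ S g) := by
  set 𝒟 : Finset (Finset (Fin n)) := {S | S.card ≤ d}
  have hinner : innerμ μ g L = ∑ S ∈ 𝒟, innerμ μ (efronStein μ S g) (efronStein μ S L) := by
    conv_lhs => rw [← sum_efronStein_apply hsum g, ← sum_efronStein_apply hsum L,
      innerμ_sum_efronStein hsum]
    refine (sum_subset (subset_univ 𝒟) fun S _ hS => ?_).symm
    rw [efronStein_eq_zero_of_degreeLE hsum hL (by simpa [𝒟] using hS)]
    simp [innerμ]
  have hL𝒟 : ∑ S ∈ 𝒟, norm2sq μ (efronStein μ S L) ≤ 1 :=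
    calc ∑ S ∈ 𝒟, norm2sq μ (efronStein μ S L)
        ≤ ∑ S, norm2sq μ (efronStein μ S L) :=
          sum_le_sum_of_subset_of_nonneg (subset_univ _) fun S _ _ => norm2sq_nonneg hμ _
      _ = norm2sq μ L := by rw [← norm2sq_sum_efronStein hsum, sum_efronStein_apply hsum]
      _ ≤ 1 := hLnorm
  refine (Real.le_sqrt hδ (sum_nonneg fun S _ => norm2sq_nonneg hμ _)).mp ?_
  calc δ ≤ ‖innerμ μ g L‖ := hcorr
    _ ≤ ∑ S ∈ 𝒟, √(norm2sq μ (efronStein μ S g)) * √(norm2sq μ (efronStein μ S L)) := by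
        rw [hinner]
        exact (norm_sum_le _ _).trans (sum_le_sum fun S _ => norm_innerμ_le hμ _ _)
    _ ≤ √(∑ S ∈ 𝒟, norm2sq μ (efronStein μ S g)) * √(∑ S ∈ 𝒟, norm2sq μ (efronStein μ S L)) :=
        Real.sum_sqrt_mul_sqrt_le _ (fun _ => norm2sq_nonneg hμ _) fun _ => norm2sq_nonneg hμ _
    _ ≤ √(∑ S ∈ 𝒟, norm2sq μ (efronStein μ S g)) :=
        mul_le_of_le_one_right (Real.sqrt_nonneg _) (Real.sqrt_le_one.mpr hL𝒟)

lemma sum_pow_mul_pow_mul_norm2sq_averageOver (hsum : ∑ a, μ a = 1) {q ρ : ℝ}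
    (hqρ : q + ρ = 1) (g : (Fin n → Ω) → ℂ) :
    ∑ I : Finset (Fin n), q ^ I.card * ρ ^ (n - I.card) * norm2sq μ (averageOver μ I g) =
      ∑ S : Finset (Fin n), ρ ^ S.card * norm2sq μ (efronStein μ S g) := by
  simp only [norm2sq_averageOver hsum, mul_sum]
  rw [sum_comm' (t' := univ) (s' := fun S => Sᶜ.powerset) fun I S => by
    simp only [mem_univ, mem_powerset, true_and, and_true]
    exact le_compl_comm]
  refine sum_congr rfl fun S _ => ?_
  rw [← sum_mul, ← sum_powerset_compl_pow_mul_pow hqρ S, Fintype.card_fin]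

lemma pow_mul_sq_le_sum_pow_mul_pow_mul_norm2sq_averageOver (hμ : ∀ a, 0 ≤ μ a)
    (hsum : ∑ a, μ a = 1) {L : (Fin n → Ω) → ℂ} {d : ℕ} (hL : DegreeLE L d)
    (hLnorm : norm2sq μ L ≤ 1) {g : (Fin n → Ω) → ℂ} {δ : ℝ} (hδ : 0 ≤ δ)
    (hcorr : δ ≤ ‖innerμ μ g L‖) {q ρ : ℝ} (hqρ : q + ρ = 1) (hρ0 : 0 ≤ ρ) (hρ1 : ρ ≤ 1) :
    ρ ^ d * δ ^ 2 ≤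
      ∑ I : Finset (Fin n), q ^ I.card * ρ ^ (n - I.card) * norm2sq μ (averageOver μ I g) := by
  rw [sum_pow_mul_pow_mul_norm2sq_averageOver hsum hqρ]
  calc ρ ^ d * δ ^ 2
      ≤ ∑ S with S.card ≤ d, ρ ^ d * norm2sq μ (efronStein μ S g) := by
        rw [← mul_sum]
        exact mul_le_mul_of_nonneg_left
          (sq_le_sum_norm2sq_efronStein_of_degreeLE hμ hsum hL hLnorm hδ hcorr) (pow_nonneg hρ0 d)
    _ ≤ ∑ S with S.card ≤ d, ρ ^ S.card * norm2sq μ (efronStein μ S g) :=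
        sum_le_sum fun S hS => mul_le_mul_of_nonneg_right
          (pow_le_pow_of_le_one hρ0 hρ1 (mem_filter.mp hS).2) (norm2sq_nonneg hμ _)
    _ ≤ ∑ S, ρ ^ S.card * norm2sq μ (efronStein μ S g) :=
        sum_le_sum_of_subset_of_nonneg (subset_univ _) fun S _ _ =>
          mul_nonneg (pow_nonneg hρ0 _) (norm2sq_nonneg hμ _)

lemma norm2sq_le_sq_add_sum_wtp_indicator (hμ : ∀ a, 0 ≤ μ a) (hsum : ∑ a, μ a = 1)
    {h : (Fin n → Ω) → ℂ} (hh : ∀ x, ‖h x‖ ≤ 1) (t : ℝ) :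
    norm2sq μ h ≤ t ^ 2 + ∑ y, wtp μ y * (if t ≤ ‖h y‖ then 1 else 0) := by
  have hpt : ∀ y, Complex.normSq (h y) ≤ t ^ 2 + if t ≤ ‖h y‖ then 1 else 0 := fun y => by
    rw [← Complex.sq_norm]
    split_ifs with ht
    · nlinarith [hh y, norm_nonneg (h y), sq_nonneg t]
    · nlinarith [norm_nonneg (h y)]
  calc norm2sq μ h ≤ ∑ y, wtp μ y * (t ^ 2 + if t ≤ ‖h y‖ then 1 else 0) :=
        sum_le_sum fun y _ => mul_le_mul_of_nonneg_left (hpt y) (wtp_nonneg hμ y)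
    _ = t ^ 2 + ∑ y, wtp μ y * (if t ≤ ‖h y‖ then 1 else 0) := by
        simp only [mul_add, sum_add_distrib, ← sum_mul, sum_wtp hsum, one_mul]

lemma sum_pow_mul_pow_mul_norm2sq_averageOver_le (hμ : ∀ a, 0 ≤ μ a) (hsum : ∑ a, μ a = 1)
    {q ρ : ℝ} (hq : 0 ≤ q) (hρ : 0 ≤ ρ) (hqρ : q + ρ = 1) {g : (Fin n → Ω) → ℂ}
    (hg : ∀ x, ‖g x‖ ≤ 1) (t : ℝ) :
    ∑ I : Finset (Fin n), q ^ I.card * ρ ^ (n - I.card) * norm2sq μ (averageOver μ I g) ≤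
      t ^ 2 + ∑ I : Finset (Fin n), ∑ y, q ^ I.card * ρ ^ (n - I.card) * wtp μ y *
        (if t ≤ ‖averageOver μ I g y‖ then 1 else 0) :=
  calc ∑ I : Finset (Fin n), q ^ I.card * ρ ^ (n - I.card) * norm2sq μ (averageOver μ I g)
      ≤ ∑ I : Finset (Fin n), q ^ I.card * ρ ^ (n - I.card) *
          (t ^ 2 + ∑ y, wtp μ y * (if t ≤ ‖averageOver μ I g y‖ then 1 else 0)) :=
        sum_le_sum fun I _ => mul_le_mul_of_nonneg_left
          (norm2sq_le_sq_add_sum_wtp_indicator hμ hsum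
            (norm_averageOver_apply_le_one hμ hsum hg I) t) (by positivity)
    _ = _ := by
        simp only [mul_add, sum_add_distrib, ← sum_mul, Fin.sum_pow_mul_eq_add_pow, hqρ, one_pow,
          one_mul]
        simp only [mul_sum, mul_assoc]

end RandomRestriction

open RandomRestriction

theorem correlation_after_restriction_general (Ω : Type) [Fintype Ω] (μ : Ω → ℝ)
    (hμ : ∀ a, 0 < μ a) (hsum : ∑ a, μ a = 1)
    (H : Type) [AddCommGroup H] [Fintype H]
    (n d : ℕ) (hd : 1 ≤ d)
    (f P L : (Fin n → Ω) → ℂ)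
    (hf : ∀ x, ‖f x‖ ≤ 1)
    (hP : IsProductFn H P)
    (hL : DegreeLE L d) (hLnorm : norm2sq μ L ≤ 1)
    (δ : ℝ) (hδ : 0 < δ)
    (hcorr : δ ≤ ‖innerμ μ f (fun x => P x * L x)‖) :
    δ ^ 2 / (2 * Real.exp 1) ≤
      ∑ I : Finset (Fin n), ∑ y : Fin n → Ω,
        (1 / (2 * (d : ℝ))) ^ I.card * (1 - 1 / (2 * (d : ℝ))) ^ (n - I.card) * wtp μ y *
          (if δ / Real.sqrt (2 * Real.exp 1) ≤
              ‖∑ w : {i // i ∈ I} → Ω,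
                ((∏ i, μ (w i) : ℝ) : ℂ) * f (mergeF I w y) *
                  starRingEnd ℂ (P (mergeF I w y))‖
           then 1 else 0) := by
  have hμ0 : ∀ a, 0 ≤ μ a := fun a => (hμ a).le
  set q : ℝ := 1 / (2 * (d : ℝ))
  have hqρ : q + (1 - q) = 1 := add_sub_cancel q 1
  have hρd : 1 / 2 ≤ (1 - q) ^ d := half_le_one_sub_inv_two_mul_pow hd
  have hq0 : 0 ≤ q := by positivity
  have hq1 : q ≤ 1 := by
    have : (1 : ℝ) ≤ d := by exact_mod_cast hd
    rw [div_le_one (by positivity)]; linarith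
  set g : (Fin n → Ω) → ℂ := fun x => f x * starRingEnd ℂ (P x)
  have hg : ∀ x, ‖g x‖ ≤ 1 := fun x => by simpa [g, hP.norm_eq_one x] using hf x
  have hgL : innerμ μ f (fun x => P x * L x) = innerμ μ g L := by
    simp only [innerμ, g, map_mul, mul_assoc]
  have hrestrict : ∀ I y, ∑ w : {i // i ∈ I} → Ω, ((∏ i, μ (w i) : ℝ) : ℂ) * f (mergeF I w y) *
      starRingEnd ℂ (P (mergeF I w y)) = averageOver μ I g y := fun I y => by
    simp only [averageOver_apply_eq_sum_mergeF hsum, g, mul_assoc]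
  simp only [hrestrict]
  have hlow := pow_mul_sq_le_sum_pow_mul_pow_mul_norm2sq_averageOver hμ0 hsum hL hLnorm hδ.le
    (hgL ▸ hcorr) hqρ (by linarith) (by linarith)
  have hup := sum_pow_mul_pow_mul_norm2sq_averageOver_le hμ0 hsum hq0 (by linarith)
    hqρ hg (δ / √(2 * Real.exp 1))
  have ht : (δ / √(2 * Real.exp 1)) ^ 2 = δ ^ 2 / (2 * Real.exp 1) := by
    rw [div_pow, Real.sq_sqrt (by positivity)]
  have he : δ ^ 2 / (2 * Real.exp 1) ≤ δ ^ 2 / 4 :=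
    div_le_div_of_nonneg_left (sq_nonneg δ) (by norm_num) (by linarith [Real.add_one_le_exp 1])
  have hρδ : δ ^ 2 / 2 ≤ (1 - q) ^ d * δ ^ 2 := by nlinarith [sq_nonneg δ]
  linarith

/-- **Correlation with a product function survives random restrictions.** If a 1-bounded
`f : Ω^n → ℂ` satisfies `|⟨f, P·L⟩| ≥ δ` for `P ∈ 𝒫(H,n,Ω)` and a degree-`≤ d` function `L` of
`L²`-norm at most `1`, then a random restriction `(I,y)` with alive-probability `1/(2d)`
satisfies `|⟨f_{Ī→y}, P_{Ī→y}⟩| ≥ δ/√(2e)` with probability at least `δ²/(2e)`. -/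
theorem correlation_after_restriction (Ω : Type) [Fintype Ω] [Nonempty Ω] (μ : Ω → ℝ)
    (hμ : ∀ a, 0 < μ a) (hsum : ∑ a, μ a = 1)
    (H : Type) [AddCommGroup H] [Fintype H]
    (n d : ℕ) (hd : 1 ≤ d)
    (f P L : (Fin n → Ω) → ℂ)
    (hf : ∀ x, ‖f x‖ ≤ 1)
    (hP : IsProductFn H P)
    (hL : DegreeLE L d) (hLnorm : norm2sq μ L ≤ 1)
    (δ : ℝ) (hδ : 0 < δ)
    (hcorr : δ ≤ ‖innerμ μ f (fun x => P x * L x)‖) :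
    δ ^ 2 / (2 * Real.exp 1) ≤
      ∑ I : Finset (Fin n), ∑ y : Fin n → Ω,
        (1 / (2 * (d : ℝ))) ^ I.card * (1 - 1 / (2 * (d : ℝ))) ^ (n - I.card) * wtp μ y *
          (if δ / Real.sqrt (2 * Real.exp 1) ≤
              ‖∑ w : {i // i ∈ I} → Ω,
                ((∏ i, μ (w i) : ℝ) : ℂ) * f (mergeF I w y) *
                  starRingEnd ℂ (P (mergeF I w y))‖
           then 1 else 0) :=
  correlation_after_restriction_general Ω μ hμ hsum H n d hd f P L hf hP hL hLnorm δ hδ hcorr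

end
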